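/- arXiv:1112.3578 — 5 statements merged into one kernel-verified Lean document; each statement's English description precedes it below -/
import Mathlib

section
/- Let q₁ < q₂ < q₃ be extended rationals (with ∞ = 1/0) written in lowest terms qᵢ = dᵢ/rᵢ with rᵢ ≥ 0. Then |dᵢrⱼ − rᵢdⱼ| = 1 for all 1 ≤ i < j ≤ 3 if and only if |d₁r₃ − r₁d₃| = 1 and d₂ = d₁ + d₃ and r₂ = r₁ + r₃. -/
def delta (p q : ℤ × ℤ) : ℤ := |p.1 * q.2 - p.2 * q.1|

def lowest (p : ℤ × ℤ) : Prop :=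
  Int.gcd p.1 p.2 = 1 ∧ 0 ≤ p.2 ∧ (p.2 = 0 → 0 < p.1)

def fless (p q : ℤ × ℤ) : Prop := p.1 * q.2 < q.1 * p.2

/-- for extended rationals `q₁ < q₂ < q₃` in lowest terms,
pairwise Farey neighborliness is equivalent to `q₁, q₃` being Farey neighbors
together with `q₂` being their Farey sum (mediant). -/
theorem farey_triple_iff_mediant (q₁ q₂ q₃ : ℤ × ℤ)
    (h1 : lowest q₁) (h2 : lowest q₂) (h3 : lowest q₃)
    (h12 : fless q₁ q₂) (h23 : fless q₂ q₃) :
    (delta q₁ q₂ = 1 ∧ delta q₁ q₃ = 1 ∧ delta q₂ q₃ = 1) ↔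
      (delta q₁ q₃ = 1 ∧ q₂.1 = q₁.1 + q₃.1 ∧ q₂.2 = q₁.2 + q₃.2) := by
  obtain ⟨-, hr1, -⟩ := h1
  obtain ⟨-, hr2, -⟩ := h2
  obtain ⟨-, hr3, -⟩ := h3
  simp only [delta, fless] at *
  have one_nonneg : (0:ℤ) ≤ 1 := by norm_num
  constructor
  · rintro ⟨ha, hc, hb⟩
    have ha' : q₂.1 * q₁.2 - q₁.1 * q₂.2 = 1 := by
      rcases (abs_eq one_nonneg).mp ha with h | h <;> linarith
    have hb' : q₃.1 * q₂.2 - q₂.1 * q₃.2 = 1 := by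
      rcases (abs_eq one_nonneg).mp hb with h | h <;> linarith
    rcases (abs_eq one_nonneg).mp hc with h | h
    · -- d₁r₃ - r₁d₃ = 1, bad sign case: forces all denominators 0
      exfalso
      have hid : q₁.2 + q₂.2 + q₃.2 = 0 := by
        linear_combination -(q₁.2 * hb') - q₃.2 * ha' - q₂.2 * h
      have h20 : q₂.2 = 0 := by linarith
      have h10 : q₁.2 = 0 := by linarith
      rw [h20, h10] at h12
      simp at h12
    · -- d₃r₁ - d₁r₃ = 1
      refine ⟨hc, ?_, ?_⟩
      · linear_combination q₁.1 * hb' + q₃.1 * ha' + q₂.1 * h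
      · linear_combination q₁.2 * hb' + q₃.2 * ha' + q₂.2 * h
  · rintro ⟨hc, hd, hr⟩
    refine ⟨?_, hc, ?_⟩
    · rw [hd, hr]; rw [show q₁.1 * (q₁.2 + q₃.2) - q₁.2 * (q₁.1 + q₃.1)
        = q₁.1 * q₃.2 - q₁.2 * q₃.1 by ring]; exact hc
    · rw [hd, hr]; rw [show (q₁.1 + q₃.1) * q₃.2 - (q₁.2 + q₃.2) * q₃.1
        = q₁.1 * q₃.2 - q₁.2 * q₃.1 by ring]; exact hc
end

section
/- For any Farey triple T = [q_f, q_s, q_t] with q_f < q_s < q_t other than [−1, 0, ∞], there exists a unique direction k ∈ {f, s, t} such that the complexity c(μ_k(T)) is strictly smaller than c(T), where complexity c[q_f,q_s,q_t] = |d(q_s)| + r(q_s). -/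
def fnorm (p : ℤ × ℤ) : ℤ × ℤ :=
  if p.2 < 0 ∨ (p.2 = 0 ∧ p.1 < 0) then (-p.1, -p.2) else p

def isBetween (x m y : ℤ × ℤ) : Prop :=
  (fless x m ∧ fless m y) ∨ (fless y m ∧ fless m x)

open Classical in
noncomputable def fmut (T : Fin 3 → ℤ × ℤ) (k : Fin 3) : Fin 3 → ℤ × ℤ :=
  Function.update T k
    (if isBetween (T (k + 1)) (T k) (T (k + 2))
     then fnorm (T (k + 1) - T (k + 2))
     else T (k + 1) + T (k + 2))

/-- The complexity of a triple at its middle element: `|d(q_s)| + r(q_s)`. -/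
def cAt (p : ℤ × ℤ) : ℤ := |p.1| + p.2

/-!
The middle element of a Farey triple is the mediant `x + y` of the outer ones: the three
determinants are `±1`, so by Cramer's rule one element is `±x ± y` in terms of the other two,
and nonnegative denominators leave only `z = x + y`, `x = y + z` or `y = x + z`. Mutating an
outer element makes `x + 2y` (or `2x + y`) the new middle, while mutating the middle makes `x`
or `y` the new middle. If the numerators of `x` and `y` do not have opposite signs, `|d| + r` is
additive along these sums, so only the middle mutation lowers the complexity. Otherwise the
determinant condition forces `{x, y} = {a/1, 1/0}` with `a < 0`, the triple is `[a, a + 1, ∞]`,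
and for `a ≠ -1` only replacing `a` by `a + 2` lowers the complexity.
-/

namespace Farey

def cross (p q : ℤ × ℤ) : ℤ := p.1 * q.2 - p.2 * q.1

lemma delta_eq_abs_cross (p q : ℤ × ℤ) : delta p q = |cross p q| := rfl

lemma cross_ne_zero_of_delta_eq_one {p q : ℤ × ℤ} (h : delta p q = 1) : cross p q ≠ 0 := by
  intro h0
  rw [delta_eq_abs_cross, h0, abs_zero] at h
  exact zero_ne_one h

lemma cross_swap (p q : ℤ × ℤ) : cross q p = -cross p q := by
  unfold cross; ring

lemma cross_add_left (p q : ℤ × ℤ) : cross (p + q) q = cross p q := by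
  simp only [cross, Prod.fst_add, Prod.snd_add]; ring

lemma cross_sub_left (p q : ℤ × ℤ) : cross (p - q) q = cross p q := by
  simp only [cross, Prod.fst_sub, Prod.snd_sub]; ring

lemma cross_smul_eq_add (x y z : ℤ × ℤ) :
    cross x y • z = cross z y • x + cross x z • y := by
  ext <;> simp only [cross, Prod.smul_fst, Prod.smul_snd, Prod.fst_add, Prod.snd_add,
    smul_eq_mul] <;> ring

lemma isBetween_comm {x m y : ℤ × ℤ} : isBetween x m y ↔ isBetween y m x := or_comm

lemma isBetween_add {x y : ℤ × ℤ} (h : cross x y ≠ 0) : isBetween x (x + y) y := by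
  simp only [isBetween, fless, cross, Prod.fst_add, Prod.snd_add] at h ⊢
  rcases h.lt_or_gt with h | h
  · left; constructor <;> linarith
  · right; constructor <;> linarith

lemma not_isBetween_add (x y : ℤ × ℤ) : ¬ isBetween y x (x + y) := by
  simp only [isBetween, fless, Prod.fst_add, Prod.snd_add]
  rintro (⟨h₁, h₂⟩ | ⟨h₁, h₂⟩) <;> linarith

lemma fnorm_neg (p : ℤ × ℤ) : fnorm (-p) = fnorm p := by
  obtain ⟨x, y⟩ := p
  simp only [fnorm, Prod.neg_mk, neg_neg]
  split_ifs <;> simp only [Prod.mk.injEq] <;> omega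

lemma fnorm_eq_or_eq_neg (p : ℤ × ℤ) : fnorm p = p ∨ fnorm p = -p := by
  unfold fnorm
  split_ifs
  · exact Or.inr rfl
  · exact Or.inl rfl

lemma fnorm_of_pos {p : ℤ × ℤ} (h : 0 < p.2) : fnorm p = p := by
  rw [fnorm, if_neg]
  omega

lemma cAt_pos {p : ℤ × ℤ} (h : lowest p) : 0 < cAt p := by
  obtain ⟨-, h₂, h₀⟩ := h
  unfold cAt
  rcases h₂.eq_or_lt with h₂ | h₂
  · have := h₀ h₂.symm
    rw [← h₂, abs_of_pos this]; omega
  · positivity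

lemma cAt_add_of_mul_nonneg {p q : ℤ × ℤ} (h : 0 ≤ p.1 * q.1) :
    cAt (p + q) = cAt p + cAt q := by
  have : |p.1 + q.1| = |p.1| + |q.1| :=
    (abs_add_eq_add_abs_iff _ _).2 ((mul_nonneg_iff.1 h).imp id fun h => ⟨h.1, h.2⟩)
  simp only [cAt, Prod.fst_add, Prod.snd_add, this]; ring

lemma cAt_add_add_of_mul_nonneg {p q : ℤ × ℤ} (h : 0 ≤ p.1 * q.1) :
    cAt (p + q + q) = cAt (p + q) + cAt q :=
  cAt_add_of_mul_nonneg (by simp only [Prod.fst_add]; nlinarith [sq_nonneg q.1])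

lemma eq_one_zero_of_neg_of_pos {x y : ℤ × ℤ} (hx : lowest x) (hy : 0 ≤ y.2)
    (hxy : delta x y = 1) (hx₁ : x.1 < 0) (hy₁ : 0 < y.1) : x.2 = 1 ∧ y = (1, 0) := by
  obtain ⟨-, hx₂, hx₀⟩ := hx
  have hc : x.2 * y.1 - x.1 * y.2 = 1 := by
    rcases (abs_eq zero_le_one).1 hxy with h | h
    · nlinarith [mul_nonneg hx₂ hy₁.le]
    · linarith
  rcases hy.eq_or_lt with hy₂ | hy₂
  · rw [← hy₂, mul_zero, sub_zero] at hc
    have hx₂ := Int.eq_one_of_mul_eq_one_right hx₂ hc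
    rw [hx₂, one_mul] at hc
    exact ⟨hx₂, Prod.ext hc hy₂.symm⟩
  · have : x.2 = 0 := by nlinarith
    exact absurd (hx₀ this) (by omega)

lemma fin_three_eq_or_eq_or_eq {m f g : Fin 3} (hmf : m ≠ f) (hmg : m ≠ g) (hfg : f ≠ g)
    (k : Fin 3) : k = m ∨ k = f ∨ k = g := by
  revert m f g k; decide

lemma fin_three_add_one_add_two {j a b : Fin 3} (hja : j ≠ a) (hjb : j ≠ b) (hab : a ≠ b) :
    (j + 1 = a ∧ j + 2 = b) ∨ (j + 1 = b ∧ j + 2 = a) := by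
  revert j a b; decide

def IsMiddle (T : Fin 3 → ℤ × ℤ) (j : Fin 3) : Prop :=
  isBetween (T (j + 1)) (T j) (T (j + 2))

def ComplexityLT (V T : Fin 3 → ℤ × ℤ) : Prop :=
  ∀ i j, IsMiddle V i → IsMiddle T j → cAt (V i) < cAt (T j)

variable {T : Fin 3 → ℤ × ℤ} {m f g : Fin 3}

lemma isMiddle_iff_isBetween {j a b : Fin 3} (hja : j ≠ a) (hjb : j ≠ b) (hab : a ≠ b) :
    IsMiddle T j ↔ isBetween (T a) (T j) (T b) := by
  rcases fin_three_add_one_add_two hja hjb hab with ⟨ha, hb⟩ | ⟨ha, hb⟩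
  · rw [IsMiddle, ha, hb]
  · rw [IsMiddle, ha, hb, isBetween_comm]

lemma complexityLT_iff {V : Fin 3 → ℤ × ℤ} {n : Fin 3} (hV : ∀ i, IsMiddle V i ↔ i = n)
    (hT : ∀ j, IsMiddle T j ↔ j = m) : ComplexityLT V T ↔ cAt (V n) < cAt (T m) := by
  refine ⟨fun h => h n m ((hV n).2 rfl) ((hT m).2 rfl), fun h i j hi hj => ?_⟩
  rwa [(hV i).1 hi, (hT j).1 hj]

lemma fmut_of_not_isMiddle {k a b : Fin 3} (hka : k ≠ a) (hkb : k ≠ b) (hab : a ≠ b)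
    (h : ¬ IsMiddle T k) : fmut T k = Function.update T k (T a + T b) := by
  rw [fmut, if_neg (show ¬ isBetween (T (k + 1)) (T k) (T (k + 2)) from h)]
  rcases fin_three_add_one_add_two hka hkb hab with ⟨ha, hb⟩ | ⟨ha, hb⟩
  · rw [ha, hb]
  · rw [ha, hb, add_comm]

lemma fmut_of_isMiddle {k a b : Fin 3} (hka : k ≠ a) (hkb : k ≠ b) (hab : a ≠ b)
    (h : IsMiddle T k) : fmut T k = Function.update T k (fnorm (T a - T b)) := by
  rw [fmut, if_pos (show isBetween (T (k + 1)) (T k) (T (k + 2)) from h)]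
  rcases fin_three_add_one_add_two hka hkb hab with ⟨ha, hb⟩ | ⟨ha, hb⟩
  · rw [ha, hb]
  · rw [ha, hb, ← fnorm_neg, neg_sub]

structure IsMediant (T : Fin 3 → ℤ × ℤ) (m f g : Fin 3) : Prop where
  ne_fst : m ≠ f
  ne_snd : m ≠ g
  fst_ne_snd : f ≠ g
  eq_add : T m = T f + T g
  cross_ne_zero : cross (T f) (T g) ≠ 0

namespace IsMediant

lemma swap (h : IsMediant T m f g) : IsMediant T m g f where
  ne_fst := h.ne_snd
  ne_snd := h.ne_fst
  fst_ne_snd := h.fst_ne_snd.symm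
  eq_add := h.eq_add.trans (add_comm _ _)
  cross_ne_zero := by rw [cross_swap]; exact neg_ne_zero.2 h.cross_ne_zero

lemma range_eq (h : IsMediant T m f g) : Set.range T = {T m, T f, T g} := by
  ext x
  simp only [Set.mem_range, Set.mem_insert_iff, Set.mem_singleton_iff]
  constructor
  · rintro ⟨i, rfl⟩
    rcases fin_three_eq_or_eq_or_eq h.ne_fst h.ne_snd h.fst_ne_snd i with rfl | rfl | rfl <;>
      simp
  · rintro (rfl | rfl | rfl) <;> exact ⟨_, rfl⟩

lemma isMiddle_iff (h : IsMediant T m f g) (j : Fin 3) : IsMiddle T j ↔ j = m := by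
  rcases fin_three_eq_or_eq_or_eq h.ne_fst h.ne_snd h.fst_ne_snd j with rfl | rfl | rfl
  · refine iff_of_true ?_ rfl
    rw [isMiddle_iff_isBetween h.ne_fst h.ne_snd h.fst_ne_snd, h.eq_add]
    exact isBetween_add h.cross_ne_zero
  · refine iff_of_false ?_ h.ne_fst.symm
    rw [isMiddle_iff_isBetween h.fst_ne_snd h.ne_fst.symm h.ne_snd.symm, h.eq_add]
    exact not_isBetween_add _ _
  · refine iff_of_false ?_ h.ne_snd.symm
    rw [isMiddle_iff_isBetween h.fst_ne_snd.symm h.ne_snd.symm h.ne_fst.symm, h.eq_add,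
      add_comm (T f)]
    exact not_isBetween_add _ _

lemma complexityLT_fmut_fst_iff (h : IsMediant T m f g) :
    ComplexityLT (fmut T f) T ↔ cAt (T m + T g) < cAt (T m) := by
  have hf : ¬ IsMiddle T f := fun hf => h.ne_fst ((h.isMiddle_iff f).1 hf).symm
  rw [fmut_of_not_isMiddle h.ne_fst.symm h.fst_ne_snd h.ne_snd hf]
  have hV : IsMediant (Function.update T f (T m + T g)) f m g := by
    refine ⟨h.ne_fst.symm, h.fst_ne_snd, h.ne_snd, ?_, ?_⟩
    · rw [Function.update_self, Function.update_of_ne h.ne_fst,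
        Function.update_of_ne h.fst_ne_snd.symm]
    · rw [Function.update_of_ne h.ne_fst, Function.update_of_ne h.fst_ne_snd.symm, h.eq_add,
        cross_add_left]
      exact h.cross_ne_zero
  rw [complexityLT_iff hV.isMiddle_iff h.isMiddle_iff, Function.update_self]

lemma complexityLT_fmut_self_iff (h : IsMediant T m f g) (hw : fnorm (T f - T g) = T f - T g) :
    ComplexityLT (fmut T m) T ↔ cAt (T f) < cAt (T m) := by
  rw [fmut_of_isMiddle h.ne_fst h.ne_snd h.fst_ne_snd ((h.isMiddle_iff m).2 rfl), hw]
  have hV : IsMediant (Function.update T m (T f - T g)) f m g := by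
    refine ⟨h.ne_fst.symm, h.fst_ne_snd, h.ne_snd, ?_, ?_⟩
    · rw [Function.update_self, Function.update_of_ne h.ne_fst.symm,
        Function.update_of_ne h.ne_snd.symm, sub_add_cancel]
    · rw [Function.update_self, Function.update_of_ne h.ne_snd.symm, cross_sub_left]
      exact h.cross_ne_zero
  rw [complexityLT_iff hV.isMiddle_iff h.isMiddle_iff, Function.update_of_ne h.ne_fst.symm]

lemma existsUnique_of_mul_nonneg (h : IsMediant T m f g) (hf : lowest (T f))
    (hg : lowest (T g)) (hfg : 0 ≤ (T f).1 * (T g).1) : ∃! k, ComplexityLT (fmut T k) T := by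
  have hf₀ := cAt_pos hf
  have hg₀ := cAt_pos hg
  have hm : cAt (T m) = cAt (T f) + cAt (T g) := by rw [h.eq_add, cAt_add_of_mul_nonneg hfg]
  refine ⟨m, ?_, fun k hk => ?_⟩ <;> beta_reduce at *
  · rcases fnorm_eq_or_eq_neg (T f - T g) with hw | hw
    · rw [h.complexityLT_fmut_self_iff hw, hm]; omega
    · rw [h.swap.complexityLT_fmut_self_iff (by rw [← neg_sub, fnorm_neg, hw]), hm]; omega
  · rcases fin_three_eq_or_eq_or_eq h.ne_fst h.ne_snd h.fst_ne_snd k with rfl | rfl | rfl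
    · rfl
    · rw [h.complexityLT_fmut_fst_iff, h.eq_add, cAt_add_add_of_mul_nonneg hfg] at hk
      omega
    · rw [h.swap.complexityLT_fmut_fst_iff, h.swap.eq_add,
        cAt_add_add_of_mul_nonneg (mul_comm (T f).1 _ ▸ hfg)] at hk
      omega

lemma existsUnique_of_neg_of_pos (h : IsMediant T m f g) (hlf : lowest (T f))
    (hlg : lowest (T g)) (hΔ : delta (T f) (T g) = 1)
    (hne : Set.range T ≠ {((-1 : ℤ), (1 : ℤ)), (0, 1), (1, 0)})
    (hf : (T f).1 < 0) (hg : 0 < (T g).1) : ∃! k, ComplexityLT (fmut T k) T := by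
  obtain ⟨hf₂, hTg⟩ := eq_one_zero_of_neg_of_pos hlf hlg.2.1 hΔ hf hg
  set a := (T f).1
  have hTf : T f = (a, 1) := Prod.ext rfl hf₂
  have hTm : T m = (a + 1, 1) := by rw [h.eq_add, hTf, hTg]; rfl
  have ha : a ≠ -1 := by
    intro ha
    apply hne
    rw [h.range_eq, hTm, hTf, hTg, ha, Set.insert_comm]
    norm_num
  refine ⟨f, ?_, fun k hk => ?_⟩ <;> beta_reduce at *
  · rw [h.complexityLT_fmut_fst_iff, hTm, hTg]
    simp only [cAt, Prod.mk_add_mk]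
    grind
  · rcases fin_three_eq_or_eq_or_eq h.ne_fst h.ne_snd h.fst_ne_snd k with rfl | rfl | rfl
    · have hw : fnorm (T f - T g) = T f - T g := fnorm_of_pos (by simp [hTf, hTg])
      rw [h.complexityLT_fmut_self_iff hw, hTm, hTf] at hk
      simp only [cAt] at hk
      grind
    · rfl
    · rw [h.swap.complexityLT_fmut_fst_iff, hTm, hTf] at hk
      simp only [cAt, Prod.mk_add_mk] at hk
      grind

end IsMediant

lemma exists_isMediant {T : Fin 3 → ℤ × ℤ} (hl : ∀ i, lowest (T i))
    (hΔ : ∀ i j, i ≠ j → delta (T i) (T j) = 1) : ∃ m f g, IsMediant T m f g := by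
  have hunit : ∀ i j, i ≠ j → cross (T i) (T j) = 1 ∨ cross (T i) (T j) = -1 :=
    fun i j hij => (abs_eq zero_le_one).1 (hΔ i j hij)
  set e := cross (T 0) (T 1)
  -- Cramer's rule, after multiplying by `e = ±1`
  have hz : T 2 = (e * cross (T 2) (T 1)) • T 0 + (e * cross (T 0) (T 2)) • T 1 := by
    have he : e * e = 1 := by rcases hunit 0 1 (by decide) with h | h <;> simp [e, h]
    rw [mul_smul, mul_smul, ← smul_add, ← cross_smul_eq_add, smul_smul, he, one_smul]
  have hsign : ∀ i j, i ≠ j → e * cross (T i) (T j) = 1 ∨ e * cross (T i) (T j) = -1 := by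
    intro i j hij
    rcases hunit 0 1 (by decide) with h | h <;> rcases hunit i j hij with h' | h' <;>
      simp [e, h, h']
  have he : e ≠ 0 := cross_ne_zero_of_delta_eq_one (hΔ 0 1 (by decide))
  rcases hsign 2 1 (by decide) with hs | hs <;> rcases hsign 0 2 (by decide) with ht | ht <;>
    simp only [hs, ht, neg_smul, one_smul] at hz
  · exact ⟨2, 0, 1, by decide, by decide, by decide, hz, he⟩
  · refine ⟨0, 1, 2, by decide, by decide, by decide, ?_,
      cross_ne_zero_of_delta_eq_one (hΔ 1 2 (by decide))⟩
    rw [hz]; abel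
  · refine ⟨1, 0, 2, by decide, by decide, by decide, ?_,
      cross_ne_zero_of_delta_eq_one (hΔ 0 2 (by decide))⟩
    rw [hz]; abel
  · have h₂ := (hl 2).2.1
    rw [hz, Prod.snd_add, Prod.snd_neg, Prod.snd_neg] at h₂
    have h₀ : (T 0).2 = 0 := by linarith [(hl 0).2.1, (hl 1).2.1]
    have h₁ : (T 1).2 = 0 := by linarith [(hl 0).2.1, (hl 1).2.1]
    exact absurd (by simp [e, cross, h₀, h₁]) he

end Farey

open Farey in
/-- for any Farey triple other than the initial triple
`[-1/1, 0/1, 1/0]`, there is a unique direction in which mutation strictly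
decreases the complexity (the complexity of a triple being `|d| + r` for its
middle element `d/r`). -/
theorem unique_decreasing_direction (T : Fin 3 → ℤ × ℤ)
    (hl : ∀ i, lowest (T i))
    (hΔ : ∀ i j, i ≠ j → delta (T i) (T j) = 1)
    (hne : Set.range T ≠ {((-1 : ℤ), (1 : ℤ)), (0, 1), (1, 0)}) :
    ∃! k : Fin 3, ∀ i j : Fin 3,
      isBetween (fmut T k (i + 1)) (fmut T k i) (fmut T k (i + 2)) →
      isBetween (T (j + 1)) (T j) (T (j + 2)) →
      cAt (fmut T k i) < cAt (T j) := by
  obtain ⟨m, f, g, h⟩ := exists_isMediant hl hΔ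
  change ∃! k, ComplexityLT (fmut T k) T
  rcases le_or_gt 0 ((T f).1 * (T g).1) with hfg | hfg
  · exact h.existsUnique_of_mul_nonneg (hl f) (hl g) hfg
  rcases mul_neg_iff.1 hfg with ⟨hf, hg⟩ | ⟨hf, hg⟩
  · exact h.swap.existsUnique_of_neg_of_pos (hl g) (hl f) (hΔ g f h.fst_ne_snd.symm) hne hg hf
  · exact h.existsUnique_of_neg_of_pos (hl f) (hl g) (hΔ f g h.fst_ne_snd) hne hf hg
end

section
/- Every Farey triple can be obtained from the initial triple [−1/1, 0/1, 1/0] by a finite sequence of mutations; equivalently, the exchange graph of Farey triples is connected. -/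
/-- One mutation step between triples. -/
def step (T T' : Fin 3 → ℤ × ℤ) : Prop := ∃ k : Fin 3, T' = fmut T k

/-!
Mutating the same position twice returns to the start: the mediant and the Farey difference of two
Farey neighbours are their only common Farey neighbours. So it suffices to descend from any Farey
triple to the initial one. Order a triple as `x < y < z`; then `y = x + z`. If `z = 1/0` then
`x = a/1`, and mutating `x` (`a ↦ a + 2`) or `y` (`a + 1 ↦ a - 1`) lowers the total size
`∑ (|numerator| + |denominator|)` unless `a = -1` (the initial triple) or `a = 0` (one mutation
away from it). Otherwise `x` and `z` are finite with numerators of the same sign, and replacing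
`y = x + z` by `x - z` lowers the size.
-/

lemma delta_comm (p q : ℤ × ℤ) : delta p q = delta q p :=
  abs_eq_abs.mpr (Or.inr (by ring))

lemma delta_add_left_self (p q : ℤ × ℤ) : delta (p + q) p = delta p q :=
  abs_eq_abs.mpr (Or.inr (by simp only [Prod.fst_add, Prod.snd_add]; ring))

lemma delta_add_right_self (p q : ℤ × ℤ) : delta (p + q) q = delta p q :=
  abs_eq_abs.mpr (Or.inl (by simp only [Prod.fst_add, Prod.snd_add]; ring))

lemma delta_sub_left_self (p q : ℤ × ℤ) : delta (p - q) p = delta p q :=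
  abs_eq_abs.mpr (Or.inl (by simp only [Prod.fst_sub, Prod.snd_sub]; ring))

lemma delta_sub_right_self (p q : ℤ × ℤ) : delta (p - q) q = delta p q :=
  abs_eq_abs.mpr (Or.inl (by simp only [Prod.fst_sub, Prod.snd_sub]; ring))

lemma fnorm_eq_or_eq_neg (u : ℤ × ℤ) : fnorm u = u ∨ fnorm u = -u := by
  unfold fnorm
  split_ifs
  exacts [Or.inr rfl, Or.inl rfl]

lemma delta_fnorm_left (u v : ℤ × ℤ) : delta (fnorm u) v = delta u v := by
  rcases fnorm_eq_or_eq_neg u with h | h <;> rw [h]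
  exact abs_eq_abs.mpr (Or.inr (by simp only [Prod.fst_neg, Prod.snd_neg]; ring))

lemma fnorm_neg (u : ℤ × ℤ) : fnorm (-u) = fnorm u := by
  unfold fnorm
  simp only [Prod.fst_neg, Prod.snd_neg, neg_neg, Left.neg_neg_iff, neg_eq_zero]
  split_ifs <;> ext <;> simp <;> omega

lemma eq_fnorm_of_lowest {x u : ℤ × ℤ} (hx : lowest x) (h : x = u ∨ x = -u) :
    x = fnorm u := by
  obtain ⟨-, hx2, hx1⟩ := hx
  rcases h with rfl | rfl <;> unfold fnorm <;> split_ifs with hc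
  all_goals first | rfl | (ext <;> simp at * <;> omega)

lemma fnorm_eq_self_of_lowest {u : ℤ × ℤ} (hu : lowest u) : fnorm u = u :=
  (eq_fnorm_of_lowest hu (Or.inl rfl)).symm

lemma gcd_eq_one_of_delta_eq_one {u v : ℤ × ℤ} (h : delta u v = 1) : Int.gcd u.1 u.2 = 1 := by
  have hdvd : (Int.gcd u.1 u.2 : ℤ) ∣ delta u v :=
    (dvd_abs _ _).mpr <|
      dvd_sub ((Int.gcd_dvd_left _ _).mul_right _) ((Int.gcd_dvd_right _ _).mul_right _)
  rw [h] at hdvd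
  exact Nat.dvd_one.mp (by exact_mod_cast hdvd)

lemma lowest_fnorm {u : ℤ × ℤ} (hu : Int.gcd u.1 u.2 = 1) : lowest (fnorm u) := by
  have hu1 : u.2 = 0 → u.1 ≠ 0 := by rintro h2 h1; simp [h1, h2] at hu
  unfold lowest fnorm
  split_ifs with h
  · exact ⟨by simpa using hu, by omega, by omega⟩
  · exact ⟨hu, by omega, by omega⟩

lemma lowest_add {p q : ℤ × ℤ} (hp : lowest p) (hq : lowest q) (hpq : delta p q = 1) :
    lowest (p + q) := by
  refine ⟨gcd_eq_one_of_delta_eq_one ((delta_add_left_self p q).trans hpq),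
    add_nonneg hp.2.1 hq.2.1, fun h => ?_⟩
  have hp2 := hp.2.1
  have hq2 := hq.2.1
  simp only [Prod.snd_add] at h
  simp [delta, show p.2 = 0 by omega, show q.2 = 0 by omega] at hpq

lemma fless_asymm {p q : ℤ × ℤ} (h : fless p q) : ¬ fless q p := by
  unfold fless at *; linarith

lemma fless_or_fless_of_delta_eq_one {p q : ℤ × ℤ} (h : delta p q = 1) :
    fless p q ∨ fless q p := by
  unfold fless
  rcases (abs_eq zero_le_one).mp h with h | h
  · right; linarith
  · left; linarith

lemma snd_pos_of_fless {p q : ℤ × ℤ} (hp : lowest p) (hq : lowest q) (h : fless p q) :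
    0 < p.2 := by
  by_contra! hp2
  replace hp2 : p.2 = 0 := le_antisymm hp2 hp.2.1
  have := mul_nonneg (hp.2.2 hp2).le hq.2.1
  unfold fless at h
  simp only [hp2, mul_zero] at h
  omega

lemma not_fless_cycle {a b c : ℤ × ℤ} (ha : lowest a) (hb : lowest b) (hc : lowest c)
    (hab : fless a b) (hbc : fless b c) (hca : fless c a) : False := by
  have ha2 := snd_pos_of_fless ha hb hab
  have hb2 := snd_pos_of_fless hb hc hbc
  have hc2 := snd_pos_of_fless hc ha hca
  unfold fless at *
  nlinarith [mul_lt_mul_of_pos_right hab hc2, mul_lt_mul_of_pos_right hbc ha2,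
    mul_lt_mul_of_pos_right hca hb2]

lemma isBetween_comm {x m y : ℤ × ℤ} : isBetween x m y ↔ isBetween y m x :=
  Or.comm

lemma isBetween_add {p q : ℤ × ℤ} (h : delta p q ≠ 0) : isBetween p (p + q) q := by
  unfold isBetween fless
  simp only [Prod.fst_add, Prod.snd_add]
  rcases lt_or_gt_of_ne (abs_ne_zero.mp h) with h | h
  · left; constructor <;> linarith
  · right; constructor <;> linarith

lemma not_isBetween_fnorm_sub (p q : ℤ × ℤ) : ¬ isBetween p (fnorm (p - q)) q := by
  unfold isBetween fless
  rcases fnorm_eq_or_eq_neg (p - q) with h | h <;> rw [h] <;>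
    simp only [Prod.fst_sub, Prod.snd_sub, Prod.fst_neg, Prod.snd_neg] <;>
    rintro (⟨h1, h2⟩ | ⟨h1, h2⟩) <;> linarith

lemma eq_add_or_eq_fnorm_sub {x p q : ℤ × ℤ} (hx : lowest x) (hp : lowest p) (hq : lowest q)
    (hpq : delta p q = 1) (hxp : delta x p = 1) (hxq : delta x q = 1) :
    x = p + q ∨ x = fnorm (p - q) := by
  unfold delta at hpq hxp hxq
  have hd2 : (p.1 * q.2 - p.2 * q.1) * (p.1 * q.2 - p.2 * q.1) = 1 := by
    rw [← abs_mul_abs_self, hpq, one_mul]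
  -- Cramer's rule: `x = det(x,q) det(p,q) p - det(x,p) det(p,q) q`, all determinants being `±1`.
  obtain ⟨s, t, hs, ht, h1, h2⟩ : ∃ s t : ℤ, (s = 1 ∨ s = -1) ∧ (t = 1 ∨ t = -1) ∧
      x.1 = s * p.1 + t * q.1 ∧ x.2 = s * p.2 + t * q.2 := by
    refine ⟨(p.1 * q.2 - p.2 * q.1) * (x.1 * q.2 - x.2 * q.1),
      -((p.1 * q.2 - p.2 * q.1) * (x.1 * p.2 - x.2 * p.1)), ?_, ?_,
      by linear_combination (-x.1) * hd2, by linear_combination (-x.2) * hd2⟩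
    · exact (abs_eq zero_le_one).mp (by rw [abs_mul, hpq, hxq, one_mul])
    · exact (abs_eq zero_le_one).mp (by rw [abs_neg, abs_mul, hpq, hxp, one_mul])
  have hsum : x = fnorm (p + q) → x = p + q :=
    fun h => h.trans (fnorm_eq_self_of_lowest (lowest_add hp hq hpq))
  rcases hs with rfl | rfl <;> rcases ht with rfl | rfl
  · exact Or.inl (hsum (eq_fnorm_of_lowest hx (Or.inl (by ext <;> simp [h1, h2]))))
  · exact Or.inr (eq_fnorm_of_lowest hx (Or.inl (by ext <;> simp [h1, h2] <;> ring)))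
  · exact Or.inr (eq_fnorm_of_lowest hx (Or.inr (by ext <;> simp [h1, h2] <;> ring)))
  · exact Or.inl (hsum (eq_fnorm_of_lowest hx (Or.inr (by ext <;> simp [h1, h2] <;> ring))))

def fsize (u : ℤ × ℤ) : ℕ := u.1.natAbs + u.2.natAbs

lemma fsize_fnorm (u : ℤ × ℤ) : fsize (fnorm u) = fsize u := by
  rcases fnorm_eq_or_eq_neg u with h | h <;> simp [h, fsize]

lemma eq_infty_of_lowest {z : ℤ × ℤ} (hz : lowest z) (h : z.2 = 0) : z = (1, 0) := by
  have h1 := hz.2.2 h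
  have hg := hz.1
  rw [h, Int.gcd_zero_right] at hg
  ext <;> simp <;> omega

lemma fsize_descent {x z : ℤ × ℤ} (hx : lowest x) (hz : lowest z) (hxz : fless x z)
    (hΔ : delta x z = 1) :
    (x = (-1, 1) ∧ z = (1, 0)) ∨ (x = (0, 1) ∧ z = (1, 0)) ∨
      fsize (x + z + z) < fsize x ∨ fsize (fnorm (x - z)) < fsize (x + z) := by
  have hx2 := snd_pos_of_fless hx hz hxz
  unfold fless at hxz
  have hdet : x.1 * z.2 - x.2 * z.1 = -1 := by
    rcases (abs_eq zero_le_one).mp hΔ with h | h <;> linarith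
  rw [fsize_fnorm]
  unfold fsize
  simp only [Prod.fst_add, Prod.snd_add, Prod.fst_sub, Prod.snd_sub]
  rcases eq_or_lt_of_le hz.2.1 with hz2 | hz2
  · -- `z = 1/0`, `x = a/1`, `x + z = (a + 1)/1`
    obtain rfl := eq_infty_of_lowest hz hz2.symm
    obtain ⟨a, b⟩ := x
    simp only [mul_zero, mul_one, zero_sub, neg_inj] at hdet
    subst hdet
    simp only [Prod.mk.injEq, and_true]
    omega
  · -- numerators of opposite signs contradict `x < z` or force `|x.1 * z.2 - x.2 * z.1| ≥ 2`
    have hsame : 0 ≤ x.1 * z.1 := by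
      by_contra! h
      rcases mul_neg_iff.mp h with ⟨h1, h2⟩ | ⟨h1, h2⟩
      · nlinarith [mul_pos h1 hz2, mul_neg_of_neg_of_pos h2 hx2]
      · nlinarith [mul_pos_of_neg_of_neg h1 (neg_neg_of_pos hz2), mul_pos hx2 h2]
    rcases mul_nonneg_iff.mp hsame with ⟨h1, h2⟩ | ⟨h1, h2⟩ <;> omega

def IsFareyTriple (T : Fin 3 → ℤ × ℤ) : Prop :=
  (∀ i, lowest (T i)) ∧ ∀ i j, i ≠ j → delta (T i) (T j) = 1

lemma fin3_ne_add (k : Fin 3) : k ≠ k + 1 ∧ k ≠ k + 2 ∧ k + 1 ≠ k + 2 := by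
  revert k; decide

lemma fin3_neighbours : ∀ i j k : Fin 3, i ≠ j → i ≠ k → j ≠ k →
    (j + 1 = i ∧ j + 2 = k) ∨ (j + 1 = k ∧ j + 2 = i) := by
  decide

lemma range_eq_of_pairwise_ne {α : Type*} (T : Fin 3 → α) {i j k : Fin 3}
    (hij : i ≠ j) (hik : i ≠ k) (hjk : j ≠ k) : Set.range T = {T i, T j, T k} := by
  ext x
  simp only [Set.mem_range, Set.mem_insert_iff, Set.mem_singleton_iff, Fin.exists_fin_succ,
    Fin.exists_fin_zero]
  fin_cases i <;> fin_cases j <;> fin_cases k <;> simp_all <;> tauto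

lemma IsFareyTriple.update {T : Fin 3 → ℤ × ℤ} (hT : IsFareyTriple T) (k : Fin 3)
    {v : ℤ × ℤ} (hv : lowest v) (h1 : delta v (T (k + 1)) = 1) (h2 : delta v (T (k + 2)) = 1) :
    IsFareyTriple (Function.update T k v) := by
  obtain ⟨hl, hΔ⟩ := hT
  refine ⟨fun i => ?_, fun i j hij => ?_⟩
  · rcases eq_or_ne i k with rfl | hik
    · simpa using hv
    · simpa [hik] using hl i
  · fin_cases k <;> fin_cases i <;> fin_cases j <;> simp_all [delta_comm v]

lemma fmut_apply_of_ne (T : Fin 3 → ℤ × ℤ) {k l : Fin 3} (h : l ≠ k) : fmut T k l = T l :=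
  Function.update_of_ne h _ _

open Classical in
lemma fmut_apply_self_of_pairwise_ne (T : Fin 3 → ℤ × ℤ) {i j k : Fin 3}
    (hij : i ≠ j) (hik : i ≠ k) (hjk : j ≠ k) :
    fmut T j j = if isBetween (T i) (T j) (T k) then fnorm (T i - T k) else T i + T k := by
  unfold fmut
  rw [Function.update_self]
  rcases fin3_neighbours i j k hij hik hjk with ⟨rfl, rfl⟩ | ⟨rfl, rfl⟩
  · rfl
  · rw [isBetween_comm, ← neg_sub, fnorm_neg, add_comm (T (j + 1))]

lemma IsFareyTriple.fmut_eq_update {T : Fin 3 → ℤ × ℤ} (hT : IsFareyTriple T) (k : Fin 3) :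
    (T k = T (k + 1) + T (k + 2) ∧
      fmut T k = Function.update T k (fnorm (T (k + 1) - T (k + 2)))) ∨
    (T k = fnorm (T (k + 1) - T (k + 2)) ∧
      fmut T k = Function.update T k (T (k + 1) + T (k + 2))) := by
  have hpq := hT.2 _ _ (fin3_ne_add k).2.2
  rcases eq_add_or_eq_fnorm_sub (hT.1 k) (hT.1 (k + 1)) (hT.1 (k + 2)) hpq
    (hT.2 _ _ (fin3_ne_add k).1) (hT.2 _ _ (fin3_ne_add k).2.1) with h | h
  · refine Or.inl ⟨h, ?_⟩
    rw [fmut, if_pos (h ▸ isBetween_add (by rw [hpq]; exact one_ne_zero))]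
  · refine Or.inr ⟨h, ?_⟩
    rw [fmut, if_neg (h ▸ not_isBetween_fnorm_sub _ _)]

lemma IsFareyTriple.fmut_fmut {T : Fin 3 → ℤ × ℤ} (hT : IsFareyTriple T) (k : Fin 3) :
    fmut (fmut T k) k = T := by
  have hpq := hT.2 _ _ (fin3_ne_add k).2.2
  rcases hT.fmut_eq_update k with ⟨hk, h⟩ | ⟨hk, h⟩ <;> rw [h] <;> unfold fmut <;>
    simp [Function.update_of_ne, not_isBetween_fnorm_sub, isBetween_add, hpq, ← hk]

lemma isFareyTriple_fmut {T : Fin 3 → ℤ × ℤ} (hT : IsFareyTriple T) (k : Fin 3) :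
    IsFareyTriple (fmut T k) := by
  have hpq := hT.2 _ _ (fin3_ne_add k).2.2
  rcases hT.fmut_eq_update k with ⟨-, h⟩ | ⟨-, h⟩ <;> rw [h] <;> apply hT.update
  · exact lowest_fnorm (gcd_eq_one_of_delta_eq_one ((delta_sub_left_self _ _).trans hpq))
  · rw [delta_fnorm_left, delta_sub_left_self, hpq]
  · rw [delta_fnorm_left, delta_sub_right_self, hpq]
  · exact lowest_add (hT.1 _) (hT.1 _) hpq
  · rw [delta_add_left_self, hpq]
  · rw [delta_add_right_self, hpq]

lemma IsFareyTriple.exists_fless_fless {T : Fin 3 → ℤ × ℤ} (hT : IsFareyTriple T) :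
    ∃ i j k : Fin 3, i ≠ j ∧ i ≠ k ∧ j ≠ k ∧
    fless (T i) (T j) ∧ fless (T j) (T k) ∧ fless (T i) (T k) := by
  have cmp : ∀ i j, i ≠ j → fless (T i) (T j) ∨ fless (T j) (T i) :=
    fun i j h => fless_or_fless_of_delta_eq_one (hT.2 i j h)
  have acyclic := fun a b c => not_fless_cycle (hT.1 a) (hT.1 b) (hT.1 c)
  rcases cmp 0 1 (by decide) with h01 | h10 <;> rcases cmp 0 2 (by decide) with h02 | h20 <;>
    rcases cmp 1 2 (by decide) with h12 | h21
  · exact ⟨0, 1, 2, by decide, by decide, by decide, h01, h12, h02⟩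
  · exact ⟨0, 2, 1, by decide, by decide, by decide, h02, h21, h01⟩
  · exact (acyclic 0 1 2 h01 h12 h20).elim
  · exact ⟨2, 0, 1, by decide, by decide, by decide, h20, h01, h21⟩
  · exact ⟨1, 0, 2, by decide, by decide, by decide, h10, h02, h12⟩
  · exact (acyclic 0 2 1 h02 h21 h10).elim
  · exact ⟨1, 2, 0, by decide, by decide, by decide, h12, h20, h10⟩
  · exact ⟨2, 1, 0, by decide, by decide, by decide, h21, h10, h20⟩

lemma IsFareyTriple.descent {T : Fin 3 → ℤ × ℤ} (hT : IsFareyTriple T) :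
    Set.range T = {((-1 : ℤ), (1 : ℤ)), (0, 1), (1, 0)} ∨
    (∃ k, Set.range (fmut T k) = {((-1 : ℤ), (1 : ℤ)), (0, 1), (1, 0)}) ∨
    ∃ k, fsize (fmut T k k) < fsize (T k) := by
  obtain ⟨i, j, k, hij, hik, hjk, hxy, hyz, hxz⟩ := hT.exists_fless_fless
  have hmid : isBetween (T i) (T j) (T k) := Or.inl ⟨hxy, hyz⟩
  have hy : T j = T i + T k :=
    (eq_add_or_eq_fnorm_sub (hT.1 j) (hT.1 i) (hT.1 k) (hT.2 i k hik) (hT.2 j i hij.symm)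
      (hT.2 j k hjk)).resolve_right fun h => not_isBetween_fnorm_sub _ _ (h ▸ hmid)
  have hfj : fmut T j j = fnorm (T i - T k) := by
    rw [fmut_apply_self_of_pairwise_ne T hij hik hjk, if_pos hmid]
  have hfi : fmut T i i = T j + T k := by
    rw [fmut_apply_self_of_pairwise_ne T hij.symm hjk hik, if_neg]
    rintro (⟨h, -⟩ | ⟨h, -⟩)
    exacts [fless_asymm hxy h, fless_asymm hxz h]
  rcases fsize_descent (hT.1 i) (hT.1 k) hxz (hT.2 i k hik) with ⟨hx, hz⟩ | ⟨hx, hz⟩ | h | h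
  · left
    rw [range_eq_of_pairwise_ne T hij hik hjk, hy, hx, hz]
    rfl
  · refine Or.inr (Or.inl ⟨j, ?_⟩)
    rw [range_eq_of_pairwise_ne (fmut T j) hij hik hjk, hfj, fmut_apply_of_ne T hij,
      fmut_apply_of_ne T hjk.symm, hx, hz, Set.insert_comm]
    rfl
  · exact Or.inr (Or.inr ⟨i, by rwa [hfi, hy]⟩)
  · exact Or.inr (Or.inr ⟨j, by rwa [hfj, hy]⟩)

def tripleSize (T : Fin 3 → ℤ × ℤ) : ℕ := ∑ i, fsize (T i)

lemma tripleSize_fmut_lt {T : Fin 3 → ℤ × ℤ} {k : Fin 3}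
    (h : fsize (fmut T k k) < fsize (T k)) : tripleSize (fmut T k) < tripleSize T := by
  refine Finset.sum_lt_sum (fun l _ => ?_) ⟨k, Finset.mem_univ _, h⟩
  rcases eq_or_ne l k with rfl | hl
  · exact h.le
  · rw [fmut_apply_of_ne T hl]

/-- every Farey triple is obtained from the initial triple
`[-1/1, 0/1, 1/0]` by a finite sequence of mutations, i.e. the exchange
graph of Farey triples is connected. -/
theorem exchange_graph_connected (T : Fin 3 → ℤ × ℤ)
    (hl : ∀ i, lowest (T i))
    (hΔ : ∀ i j, i ≠ j → delta (T i) (T j) = 1) :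
    ∃ T₀ : Fin 3 → ℤ × ℤ,
      Set.range T₀ = {((-1 : ℤ), (1 : ℤ)), (0, 1), (1, 0)} ∧
      Relation.ReflTransGen step T₀ T := by
  induction h : tripleSize T using Nat.strong_induction_on generalizing T with
  | _ n ih =>
  have hT : IsFareyTriple T := ⟨hl, hΔ⟩
  rcases hT.descent with hbase | ⟨k, hk⟩ | ⟨k, hk⟩
  · exact ⟨T, hbase, .refl⟩
  · exact ⟨fmut T k, hk, .single ⟨k, (hT.fmut_fmut k).symm⟩⟩
  · have hT' := isFareyTriple_fmut hT k
    obtain ⟨T₀, h₀, hpath⟩ := ih _ (h ▸ tripleSize_fmut_lt hk) (fmut T k) hT'.1 hT'.2 rfl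
    exact ⟨T₀, h₀, hpath.tail ⟨k, (hT.fmut_fmut k).symm⟩⟩
end

section
/- Consider the 6×3 extended exchange matrix B̃₀ of the Markov cluster algebra with principal coefficients, whose top 3×3 part is the Markov matrix B⁺ (entries b₁₂ = −2, b₁₃ = 2, b₂₃ = −2, skew-symmetric) and whose bottom 3×3 part is the identity. For every integer a ≥ 0, the matrix obtained from B̃₀ by applying the alternating sequence of mutations μ₂, μ₁, μ₂, μ₁, ... (starting with μ₂, of total length making the last mutation arrive at the triple [a/1, (a−1)/1, 1/0]) has top part B⁺ and bottom 3×3 part equal to the matrix with rows (1−a, a, 0), (−a, a+1, 0), (0, 0, 1). -/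
/-- Mutation of a `6 × 3` extended exchange matrix at index `k ∈ Fin 3`. -/
def mutE (B : Matrix (Fin 6) (Fin 3) ℤ) (k : Fin 3) : Matrix (Fin 6) (Fin 3) ℤ :=
  Matrix.of fun i j =>
    if (i : ℕ) = (k : ℕ) ∨ j = k then -B i j
    else B i j + Int.sign (B i k) * max (B i k * B ⟨(k : ℕ), by omega⟩ j) 0

/-- The initial extended exchange matrix `B̃₀` of the Markov cluster algebra
with principal coefficients. -/
def Bt0 : Matrix (Fin 6) (Fin 3) ℤ :=
  !![0, -2, 2; 2, 0, -2; -2, 2, 0; 1, 0, 0; 0, 1, 0; 0, 0, 1]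

/-- The alternating mutation sequence `μ₂, μ₁, μ₂, μ₁, …` (starting with `μ₂`)
applied to `B̃₀`: `altseq n` is the matrix after `n` mutations. -/
def altseq : ℕ → Matrix (Fin 6) (Fin 3) ℤ
  | 0 => Bt0
  | n + 1 => mutE (altseq n) (if n % 2 = 0 then 1 else 0)

/-! The top part of every matrix along the sequence is `±B⁺`, and each mutation negates it. In the
bottom part the pivot column stays nonnegative, so the sign factor in the mutation rule is
trivial, and one round `μ₁ ∘ μ₂` sends the closed form for `a` to the closed form for `a + 2`. -/

theorem Int.sign_mul_mul_of_nonneg {x : ℤ} (hx : 0 ≤ x) (y : ℤ) : x.sign * (x * y) = x * y := by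
  rw [← mul_assoc, Int.sign_mul_self_eq_abs, abs_of_nonneg hx]

def evenStage (a : ℕ) : Matrix (Fin 6) (Fin 3) ℤ :=
  !![0, -2, 2; 2, 0, -2; -2, 2, 0;
     1 - (a : ℤ), (a : ℤ), 0; -(a : ℤ), (a : ℤ) + 1, 0; 0, 0, 1]

def oddStage (a : ℕ) : Matrix (Fin 6) (Fin 3) ℤ :=
  !![0, 2, -2; -2, 0, 2; 2, -2, 0;
     1 + (a : ℤ), -(a : ℤ), 0; (a : ℤ) + 2, -((a : ℤ) + 1), 0; 0, 0, 1]

theorem mutE_evenStage (a : ℕ) : mutE (evenStage a) 1 = oddStage a := by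
  ext i j
  fin_cases i <;> fin_cases j <;>
    simp (disch := positivity) [mutE, evenStage, oddStage, Int.sign_mul_mul_of_nonneg,
      Int.sign_eq_one_of_pos] <;> omega

theorem mutE_oddStage (a : ℕ) : mutE (oddStage a) 0 = evenStage (a + 2) := by
  ext i j
  fin_cases i <;> fin_cases j <;>
    simp (disch := positivity) [mutE, evenStage, oddStage, Int.sign_eq_one_of_pos] <;> omega

theorem altseq_two_mul (m : ℕ) : altseq (2 * m) = evenStage (2 * m) := by
  induction m with
  | zero => decide
  | succ m ih =>
    have h_odd : (2 * m + 1) % 2 ≠ 0 := by omega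
    have h_even : 2 * m % 2 = 0 := by omega
    rw [Nat.mul_succ, altseq, altseq, if_neg h_odd, if_pos h_even, ih, mutE_evenStage,
      mutE_oddStage]

/-- the matrix obtained by the alternating sequence of mutations
`μ₂, μ₁, …` arriving at the triple `[a/1, (a−1)/1, 1/0]` (after `a` mutations,
`a` even) has top part `B⁺` and bottom part with rows
`(1−a, a, 0)`, `(−a, a+1, 0)`, `(0, 0, 1)`. -/
theorem alternating_mutations (a : ℕ) (ha : Even a) :
    altseq a =
      !![0, -2, 2; 2, 0, -2; -2, 2, 0;
         1 - (a : ℤ), (a : ℤ), 0; -(a : ℤ), (a : ℤ) + 1, 0; 0, 0, 1] := by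
  obtain ⟨m, rfl⟩ := ha
  rw [← two_mul]
  exact altseq_two_mul m
end

section
/- For a Farey triple of finite rationals a/b, c/d, e/f (lowest terms, positive denominators, pairwise Farey neighbors), each of the three column vectors (a+1, b−a−1, 1−b), (c+1, d−c−1, 1−d), (e+1, f−e−1, 1−f) has coordinate sum 1, i.e. lies in the plane x + y + z = 1, and the 3×3 matrix they form has determinant ±1, so they form a basis of ℤ³. -/
/-- for a Farey triple of finite rationals `a/b, c/d, e/f`,
the three g-vectors `(a+1, b−a−1, 1−b)`, `(c+1, d−c−1, 1−d)`, `(e+1, f−e−1, 1−f)`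
lie in the plane `x + y + z = 1`, and the matrix they form has determinant `±1`
(so they form a basis of `ℤ³`). -/
theorem g_vectors_plane_and_basis (a b c d e f : ℤ)
    (hab : Int.gcd a b = 1) (hcd : Int.gcd c d = 1) (hef : Int.gcd e f = 1)
    (hb : 0 < b) (hd : 0 < d) (hf : 0 < f)
    (d1 : delta (a, b) (c, d) = 1) (d2 : delta (a, b) (e, f) = 1)
    (d3 : delta (c, d) (e, f) = 1) :
    ((a + 1) + (b - a - 1) + (1 - b) = 1 ∧
     (c + 1) + (d - c - 1) + (1 - d) = 1 ∧
     (e + 1) + (f - e - 1) + (1 - f) = 1) ∧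
    (Matrix.det !![a + 1, c + 1, e + 1;
                   b - a - 1, d - c - 1, f - e - 1;
                   1 - b, 1 - d, 1 - f] = 1 ∨
     Matrix.det !![a + 1, c + 1, e + 1;
                   b - a - 1, d - c - 1, f - e - 1;
                   1 - b, 1 - d, 1 - f] = -1) := by
  refine ⟨⟨by ring, by ring, by ring⟩, ?_⟩
  simp only [delta] at d1 d2 d3
  have hdet : Matrix.det !![a + 1, c + 1, e + 1;
                   b - a - 1, d - c - 1, f - e - 1;
                   1 - b, 1 - d, 1 - f]
      = (a * d - b * c) - (a * f - b * e) + (c * f - d * e) := by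
    rw [Matrix.det_fin_three]
    simp [Matrix.cons_val_zero, Matrix.cons_val_one]
    ring
  have key : d * (a * f - b * e) = f * (a * d - b * c) + b * (c * f - d * e) := by ring
  have h1 := abs_eq (by norm_num : (1:ℤ) ≥ 0) |>.mp d1
  have h2 := abs_eq (by norm_num : (1:ℤ) ≥ 0) |>.mp d2
  have h3 := abs_eq (by norm_num : (1:ℤ) ≥ 0) |>.mp d3
  rw [hdet]
  rcases h1 with h1 | h1 <;> rcases h2 with h2 | h2 <;> rcases h3 with h3 | h3 <;>
    rw [h1, h2, h3] <;> rw [h1, h2, h3] at key <;>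
    omega
end
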